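/- arXiv:1710.00428 — 4 statements merged into one kernel-verified Lean document; each statement's English description precedes it below -/
import Mathlib

section
/- Let f : ℝ → ℝ be three times continuously differentiable on the interval [x, x + h₁ + h₂], where h₁ > 0 and h₂ > 0, and suppose |f'''(ξ)| ≤ M for all ξ in [x, x + h₁ + h₂]. Then the one-sided three-point difference formula on the nonuniform stencil satisfies | ( h₂(2h₁ + h₂) f(x) − (h₁ + h₂)² f(x + h₁) + h₁² f(x + h₁ + h₂) ) / ( h₁ h₂ (h₁ + h₂) ) + f'(x) | ≤ M · ( h₁²(h₁ + h₂) + h₁(h₁ + h₂)² ) / (6 h₂). In particular, for mesh steps with bounded ratio h₁/h₂ the formula approximates −f'(x) with second-order accuracy O((h₁ + h₂)²). -/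
/-!
Expand `f(x + h₁)` and `f(x + h₁ + h₂)` to second order about `x`, with Lagrange remainders
`r₁, r₂` bounded by `M h₁³ / 6` and `M (h₁ + h₂)³ / 6`. The stencil weights annihilate the
constant and quadratic terms and reproduce `-f'(x)` from the linear one, so the error is
`(h₁² r₂ - (h₁ + h₂)² r₁) / (h₁ h₂ (h₁ + h₂))`.
-/

open Set Topology Nat

theorem iteratedDerivWithin_congr_set {𝕜 F : Type*} [NontriviallyNormedField 𝕜]
    [NormedAddCommGroup F] [NormedSpace 𝕜 F] {f : 𝕜 → F} {s t : Set 𝕜} {x : 𝕜}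
    (h : s =ᶠ[𝓝 x] t) (n : ℕ) :
    iteratedDerivWithin n f s x = iteratedDerivWithin n f t x := by
  simp only [iteratedDerivWithin, iteratedFDerivWithin_congr_set h]

theorem taylorWithinEval_congr_set {E : Type*} [NormedAddCommGroup E] [NormedSpace ℝ E]
    {f : ℝ → E} {s t : Set ℝ} {x₀ : ℝ} (h : s =ᶠ[𝓝 x₀] t) (n : ℕ) :
    taylorWithinEval f n s x₀ = taylorWithinEval f n t x₀ := by
  ext x
  simp only [taylor_within_apply, iteratedDerivWithin_congr_set h]

theorem Icc_eventuallyEq_Icc_of_lt {a b c y : ℝ} (hy : y < c) (hcb : c ≤ b) :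
    Icc a c =ᶠ[𝓝 y] Icc a b := by
  filter_upwards [Iio_mem_nhds hy] with z hz
  exact propext ⟨fun hz' => ⟨hz'.1, hz'.2.trans hcb⟩, fun hz' => ⟨hz'.1, hz.le⟩⟩

theorem taylorWithinEval_two (f : ℝ → ℝ) (s : Set ℝ) (x₀ x : ℝ) :
    taylorWithinEval f 2 s x₀ x = f x₀ + derivWithin f s x₀ * (x - x₀)
      + iteratedDerivWithin 2 f s x₀ * (x - x₀) ^ 2 / 2 := by
  simp only [taylorWithinEval_succ, taylor_within_zero_eval, smul_eq_mul,
    zero_add, iteratedDerivWithin_one, factorial]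
  push_cast
  ring

/-- `taylor_mean_remainder_lagrange` takes derivatives within `[a, c]`; these agree with those within
`[a, b]` on `[a, c)`, which contains every point where they are evaluated. -/
theorem taylor_mean_remainder_lagrange_Icc {f : ℝ → ℝ} {a b c : ℝ} {n : ℕ} (hac : a < c)
    (hcb : c ≤ b) (hf : ContDiffOn ℝ (n + 1) f (Icc a b)) :
    ∃ ξ ∈ Ioo a c, f c - taylorWithinEval f n (Icc a b) a c =
      iteratedDerivWithin (n + 1) f (Icc a b) ξ * (c - a) ^ (n + 1) / (n + 1)! := by
  have hfc : ContDiffOn ℝ (n + 1) f (Icc a c) := hf.mono (Icc_subset_Icc_right hcb)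
  have hdiff : DifferentiableOn ℝ (iteratedDerivWithin n f (Icc a c)) (Ioo a c) :=
    (hfc.differentiableOn_iteratedDerivWithin (by norm_cast; omega)
      (uniqueDiffOn_Icc hac)).mono Ioo_subset_Icc_self
  obtain ⟨ξ, hξ, hrem⟩ := taylor_mean_remainder_lagrange (n := n) hac.ne
    (by rw [uIcc_of_le hac.le]; exact hfc.of_succ)
    (by rwa [uIcc_of_le hac.le, uIoo_of_le hac.le])
  rw [uIoo_of_le hac.le] at hξ
  rw [uIcc_of_le hac.le, taylorWithinEval_congr_set (Icc_eventuallyEq_Icc_of_lt hac hcb),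
    iteratedDerivWithin_congr_set (Icc_eventuallyEq_Icc_of_lt hξ.2 hcb)] at hrem
  exact ⟨ξ, hξ, hrem⟩

theorem abs_sub_taylorWithinEval_Icc_le {f : ℝ → ℝ} {a b c M : ℝ} {n : ℕ} (hac : a ≤ c)
    (hcb : c ≤ b) (hf : ContDiffOn ℝ (n + 1) f (Icc a b))
    (hM : ∀ ξ ∈ Icc a b, |iteratedDerivWithin (n + 1) f (Icc a b) ξ| ≤ M) :
    |f c - taylorWithinEval f n (Icc a b) a c| ≤ M * (c - a) ^ (n + 1) / (n + 1)! := by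
  rcases hac.eq_or_lt with rfl | hac
  · simp
  obtain ⟨ξ, hξ, hrem⟩ := taylor_mean_remainder_lagrange_Icc hac hcb hf
  rw [hrem, abs_div, abs_mul, abs_of_pos (pow_pos (sub_pos.2 hac) _), Nat.abs_cast]
  gcongr
  exact hM ξ ⟨hξ.1.le, hξ.2.le.trans hcb⟩

theorem abs_sub_taylor_two_Icc_le {f : ℝ → ℝ} {a b c M : ℝ} (hac : a ≤ c) (hcb : c ≤ b)
    (hf : ContDiffOn ℝ 3 f (Icc a b))
    (hM : ∀ ξ ∈ Icc a b, |iteratedDerivWithin 3 f (Icc a b) ξ| ≤ M) :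
    |f c - (f a + derivWithin f (Icc a b) a * (c - a)
      + iteratedDerivWithin 2 f (Icc a b) a * (c - a) ^ 2 / 2)| ≤ M * (c - a) ^ 3 / 6 := by
  have h := abs_sub_taylorWithinEval_Icc_le (n := 2) hac hcb hf hM
  rwa [taylorWithinEval_two, show ((2 + 1)! : ℝ) = 6 by norm_num [Nat.factorial]] at h

/-- The stencil is exact on quadratics, so only the second-order Taylor remainders survive. -/
theorem threePointStencil_add_deriv_eq {h₁ h₂ : ℝ} (hh₁ : h₁ ≠ 0) (hh₂ : h₂ ≠ 0)
    (hh : h₁ + h₂ ≠ 0) (f₀ f₁ f₂ d d₂ : ℝ) :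
    (h₂ * (2 * h₁ + h₂) * f₀ - (h₁ + h₂) ^ 2 * f₁ + h₁ ^ 2 * f₂) / (h₁ * h₂ * (h₁ + h₂)) + d
      = (h₁ ^ 2 * (f₂ - (f₀ + d * (h₁ + h₂) + d₂ * (h₁ + h₂) ^ 2 / 2))
          - (h₁ + h₂) ^ 2 * (f₁ - (f₀ + d * h₁ + d₂ * h₁ ^ 2 / 2))) / (h₁ * h₂ * (h₁ + h₂)) := by
  field_simp
  ring

theorem abs_threePointStencil_remainder_le {h₁ h₂ r₁ r₂ M : ℝ} (hh₁ : 0 < h₁) (hh₂ : 0 < h₂)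
    (hr₁ : |r₁| ≤ M * h₁ ^ 3 / 6) (hr₂ : |r₂| ≤ M * (h₁ + h₂) ^ 3 / 6) :
    |(h₁ ^ 2 * r₂ - (h₁ + h₂) ^ 2 * r₁) / (h₁ * h₂ * (h₁ + h₂))|
      ≤ M * (h₁ ^ 2 * (h₁ + h₂) + h₁ * (h₁ + h₂) ^ 2) / (6 * h₂) := by
  have hden : 0 < h₁ * h₂ * (h₁ + h₂) := by positivity
  have hnum : |h₁ ^ 2 * r₂ - (h₁ + h₂) ^ 2 * r₁|
      ≤ h₁ ^ 2 * (M * (h₁ + h₂) ^ 3 / 6) + (h₁ + h₂) ^ 2 * (M * h₁ ^ 3 / 6) :=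
    calc |h₁ ^ 2 * r₂ - (h₁ + h₂) ^ 2 * r₁|
        ≤ |h₁ ^ 2 * r₂| + |(h₁ + h₂) ^ 2 * r₁| := abs_sub _ _
      _ = h₁ ^ 2 * |r₂| + (h₁ + h₂) ^ 2 * |r₁| := by
          rw [abs_mul, abs_mul, abs_of_nonneg (sq_nonneg h₁),
            abs_of_nonneg (sq_nonneg (h₁ + h₂))]
      _ ≤ _ := by gcongr
  calc _ ≤ (h₁ ^ 2 * (M * (h₁ + h₂) ^ 3 / 6) + (h₁ + h₂) ^ 2 * (M * h₁ ^ 3 / 6))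
        / (h₁ * h₂ * (h₁ + h₂)) := by
        rw [abs_div, abs_of_pos hden]
        gcongr
    _ = _ := by
        field_simp
        ring

/-- Truncation-error estimate for the forward one-sided three-point difference
formula on a nonuniform stencil with steps `h₁`, `h₂`: if `f` is three times
continuously differentiable on `[x, x + h₁ + h₂]` with `|f'''| ≤ M` there, then
the stencil approximates `−f'(x)` with the stated error bound. -/
theorem forward_three_point_stencil_error
    (f : ℝ → ℝ) (x h₁ h₂ M : ℝ) (hh₁ : 0 < h₁) (hh₂ : 0 < h₂)
    (hf : ContDiffOn ℝ 3 f (Set.Icc x (x + h₁ + h₂)))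
    (hM : ∀ ξ ∈ Set.Icc x (x + h₁ + h₂),
      |iteratedDerivWithin 3 f (Set.Icc x (x + h₁ + h₂)) ξ| ≤ M) :
    |(h₂ * (2 * h₁ + h₂) * f x - (h₁ + h₂) ^ 2 * f (x + h₁)
        + h₁ ^ 2 * f (x + h₁ + h₂)) / (h₁ * h₂ * (h₁ + h₂))
      + derivWithin f (Set.Icc x (x + h₁ + h₂)) x|
      ≤ M * (h₁ ^ 2 * (h₁ + h₂) + h₁ * (h₁ + h₂) ^ 2) / (6 * h₂) := by
  have hr₁ := abs_sub_taylor_two_Icc_le (c := x + h₁) (by linarith) (by linarith) hf hM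
  have hr₂ := abs_sub_taylor_two_Icc_le (c := x + h₁ + h₂) (by linarith) le_rfl hf hM
  rw [add_sub_cancel_left] at hr₁
  rw [show x + h₁ + h₂ - x = h₁ + h₂ by ring] at hr₂
  rw [threePointStencil_add_deriv_eq hh₁.ne' hh₂.ne' (add_pos hh₁ hh₂).ne' _ _ _ _
    (iteratedDerivWithin 2 f (Icc x (x + h₁ + h₂)) x)]
  exact abs_threePointStencil_remainder_le hh₁ hh₂ hr₁ hr₂
end

section
/- Let f : ℝ → ℝ be three times continuously differentiable on the interval [x − h − h', x], where h > 0 and h' > 0, and suppose |f'''(ξ)| ≤ M for all ξ in [x − h − h', x]. Then the backward one-sided three-point difference formula on the nonuniform stencil satisfies | ( h'(2h + h') f(x) − (h + h')² f(x − h) + h² f(x − h − h') ) / ( h h' (h + h') ) − f'(x) | ≤ M · ( h²(h + h') + h(h + h')² ) / (6 h'). In particular, for mesh steps with bounded ratio h/h' the formula approximates f'(x) with second-order accuracy O((h + h')²). -/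
/-!
Expanding `f (x - h)` and `f (x - h - h')` about `x` to second order with Lagrange remainders
`f''' ξ₁`, `f''' ξ₂`, the stencil weights annihilate `f x` and `f'' x` and reproduce `f' x`
exactly, leaving the error `h (h + h') (h f''' ξ₁ - (h + h') f''' ξ₂) / (6 h')`.
-/

open scoped Nat
open Set

theorem iteratedDerivWithin_of_subset {𝕜 F : Type*} [NontriviallyNormedField 𝕜]
    [NormedAddCommGroup F] [NormedSpace 𝕜 F] {f : 𝕜 → F} {s t : Set 𝕜} {x : 𝕜} {n : ℕ}
    (st : s ⊆ t) (hs : UniqueDiffOn 𝕜 s) (ht : UniqueDiffOn 𝕜 t) (hf : ContDiffOn 𝕜 n f t)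
    (hx : x ∈ s) :
    iteratedDerivWithin n f s x = iteratedDerivWithin n f t x := by
  simp only [iteratedDerivWithin_eq_iteratedFDerivWithin,
    iteratedFDerivWithin_subset st hs ht hf hx]

theorem taylorWithinEval_of_subset {E : Type*} [NormedAddCommGroup E] [NormedSpace ℝ E]
    {f : ℝ → E} {s t : Set ℝ} {x₀ x : ℝ} {n : ℕ}
    (st : s ⊆ t) (hs : UniqueDiffOn ℝ s) (ht : UniqueDiffOn ℝ t) (hf : ContDiffOn ℝ n f t)
    (hx₀ : x₀ ∈ s) :
    taylorWithinEval f n s x₀ x = taylorWithinEval f n t x₀ x := by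
  simp only [taylor_within_apply]
  refine Finset.sum_congr rfl fun k hk => ?_
  rw [iteratedDerivWithin_of_subset st hs ht (hf.of_le ?_) hx₀]
  exact_mod_cast Nat.lt_succ_iff.mp (Finset.mem_range.mp hk)

theorem taylor_mean_remainder_lagrange_of_subset {f : ℝ → ℝ} {s : Set ℝ} {x x₀ : ℝ} {n : ℕ}
    (hx : x₀ ≠ x) (hs : UniqueDiffOn ℝ s) (hsub : uIcc x₀ x ⊆ s)
    (hf : ContDiffOn ℝ (n + 1) f s) :
    ∃ x' ∈ uIoo x₀ x, f x - taylorWithinEval f n s x₀ x =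
      iteratedDerivWithin (n + 1) f s x' * (x - x₀) ^ (n + 1) / (n + 1)! := by
  have hu : UniqueDiffOn ℝ (uIcc x₀ x) := uniqueDiffOn_uIcc hx
  have hf' : ContDiffOn ℝ (n + 1) f (uIcc x₀ x) := hf.mono hsub
  obtain ⟨x', hx', h⟩ := taylor_mean_remainder_lagrange hx hf'.of_succ
    ((hf'.differentiableOn_iteratedDerivWithin (by norm_cast; omega) hu).mono
      uIoo_subset_uIcc_self)
  refine ⟨x', hx', ?_⟩
  rwa [taylorWithinEval_of_subset hsub hu hs hf.of_succ left_mem_uIcc,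
    iteratedDerivWithin_of_subset hsub hu hs (mod_cast hf) (uIoo_subset_uIcc_self hx')] at h

theorem exists_eq_taylor_two_add_lagrange {f : ℝ → ℝ} {s : Set ℝ} {x₀ x : ℝ}
    (hx : x₀ ≠ x) (hs : UniqueDiffOn ℝ s) (hsub : uIcc x₀ x ⊆ s) (hf : ContDiffOn ℝ 3 f s) :
    ∃ c ∈ uIoo x₀ x, f x = f x₀ + derivWithin f s x₀ * (x - x₀)
      + iteratedDerivWithin 2 f s x₀ * (x - x₀) ^ 2 / 2
      + iteratedDerivWithin 3 f s c * (x - x₀) ^ 3 / 6 := by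
  obtain ⟨c, hc, h⟩ := taylor_mean_remainder_lagrange_of_subset (n := 2) hx hs hsub hf
  refine ⟨c, hc, ?_⟩
  simp only [taylor_within_apply, Finset.sum_range_succ, Finset.sum_range_zero,
    iteratedDerivWithin_zero, iteratedDerivWithin_one, smul_eq_mul] at h
  norm_num [Nat.factorial] at h
  linear_combination h

theorem backward_stencil_sub_eq {u₀ u₁ u₂ B C D₁ D₂ h h' : ℝ}
    (hh : h ≠ 0) (hh' : h' ≠ 0) (hhh : h + h' ≠ 0)
    (hu₁ : u₁ = u₀ + B * -h + C * (-h) ^ 2 / 2 + D₁ * (-h) ^ 3 / 6)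
    (hu₂ : u₂ = u₀ + B * -(h + h') + C * (-(h + h')) ^ 2 / 2 + D₂ * (-(h + h')) ^ 3 / 6) :
    (h' * (2 * h + h') * u₀ - (h + h') ^ 2 * u₁ + h ^ 2 * u₂) / (h * h' * (h + h')) - B
      = h * (h + h') * (h * D₁ - (h + h') * D₂) / (6 * h') := by
  subst hu₁ hu₂
  field_simp
  ring

theorem abs_mul_sub_mul_le {a b D₁ D₂ M : ℝ} (ha : 0 ≤ a) (hb : 0 ≤ b)
    (hD₁ : |D₁| ≤ M) (hD₂ : |D₂| ≤ M) : |a * D₁ - b * D₂| ≤ M * (a + b) :=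
  calc |a * D₁ - b * D₂| ≤ a * |D₁| + b * |D₂| := by
        simpa only [abs_mul, abs_of_nonneg ha, abs_of_nonneg hb] using abs_sub (a * D₁) (b * D₂)
    _ ≤ a * M + b * M := by gcongr
    _ = M * (a + b) := by ring

/-- Truncation-error estimate for the backward one-sided three-point difference
formula on a nonuniform stencil with steps `h`, `h'`: if `f` is three times
continuously differentiable on `[x − h − h', x]` with `|f'''| ≤ M` there, then
the stencil approximates `f'(x)` with the stated error bound. -/
theorem backward_three_point_stencil_error
    (f : ℝ → ℝ) (x h h' M : ℝ) (hh : 0 < h) (hh' : 0 < h')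
    (hf : ContDiffOn ℝ 3 f (Set.Icc (x - h - h') x))
    (hM : ∀ ξ ∈ Set.Icc (x - h - h') x,
      |iteratedDerivWithin 3 f (Set.Icc (x - h - h') x) ξ| ≤ M) :
    |(h' * (2 * h + h') * f x - (h + h') ^ 2 * f (x - h)
        + h ^ 2 * f (x - h - h')) / (h * h' * (h + h'))
      - derivWithin f (Set.Icc (x - h - h') x) x|
      ≤ M * (h ^ 2 * (h + h') + h * (h + h') ^ 2) / (6 * h') := by
  set I := Icc (x - h - h') x
  have hI : UniqueDiffOn ℝ I := uniqueDiffOn_Icc (by linarith)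
  have hxI : x ∈ I := right_mem_Icc.mpr (by linarith)
  have hI₁ : uIcc x (x - h) ⊆ I := uIcc_subset_Icc hxI ⟨by linarith, by linarith⟩
  have hI₂ : uIcc x (x - h - h') ⊆ I := uIcc_subset_Icc hxI (left_mem_Icc.mpr (by linarith))
  obtain ⟨c₁, hc₁, e₁⟩ := exists_eq_taylor_two_add_lagrange (by linarith) hI hI₁ hf
  obtain ⟨c₂, hc₂, e₂⟩ := exists_eq_taylor_two_add_lagrange (by linarith) hI hI₂ hf
  rw [show x - h - x = -h by ring] at e₁
  rw [show x - h - h' - x = -(h + h') by ring] at e₂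
  have hD := abs_mul_sub_mul_le (a := h) (b := h + h') (by positivity) (by positivity)
    (hM c₁ (hI₁ (uIoo_subset_uIcc_self hc₁))) (hM c₂ (hI₂ (uIoo_subset_uIcc_self hc₂)))
  rw [backward_stencil_sub_eq hh.ne' hh'.ne' (by positivity) e₁ e₂, abs_div, abs_mul, abs_mul,
    abs_of_pos hh, abs_of_pos (by positivity : 0 < h + h'), abs_of_pos (by positivity : 0 < 6 * h')]
  calc h * (h + h') * |h * _ - (h + h') * _| / (6 * h')
      ≤ h * (h + h') * (M * (h + (h + h'))) / (6 * h') := by gcongr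
    _ = M * (h ^ 2 * (h + h') + h * (h + h') ^ 2) / (6 * h') := by ring
end

section
/- Let λ₁, λ₂ > 0 and h, h', k, k' > 0. Consider the row of the scheme matrix coming from the discrete inner-boundary condition, with diagonal entry λ₁·(2h + h')/(h(h + h')) + λ₂·(2k + k')/(k(k + k')) and off-diagonal entries of absolute values λ₁·(h + h')/(h h'), λ₁·h/(h'(h + h')), λ₂·(k + k')/(k k'), λ₂·k/(k'(k + k')). Then the sum of absolute values of the off-diagonal entries exceeds the diagonal entry by exactly p = 2λ₁·h/(h'(h + h')) + 2λ₂·k/(k'(k + k')); consequently adding p to the diagonal entry produces a row with |diagonal| equal to the sum of absolute values of off-diagonal entries, i.e., p is precisely the minimal nonnegative value whose addition makes this row weakly diagonally dominant. -/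
/-- For the inner-boundary row of the scheme matrix, with diagonal entry
`λ₁(2h+h')/(h(h+h')) + λ₂(2k+k')/(k(k+k'))` and off-diagonal entries of
absolute values `λ₁(h+h')/(hh')`, `λ₁h/(h'(h+h'))`, `λ₂(k+k')/(kk')`,
`λ₂k/(k'(k+k'))`, the sum of off-diagonal absolute values exceeds the diagonal
entry by exactly `p = 2λ₁h/(h'(h+h')) + 2λ₂k/(k'(k+k'))`; adding `p` to the
diagonal yields equality, and `p` is the minimal nonnegative value whose
addition makes the row weakly diagonally dominant. -/
theorem inner_boundary_row_diagonal_dominantization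
    (l₁ l₂ h h' k k' : ℝ) (hl₁ : 0 < l₁) (hl₂ : 0 < l₂)
    (hh : 0 < h) (hh' : 0 < h') (hk : 0 < k) (hk' : 0 < k') :
    (l₁ * ((h + h') / (h * h')) + l₁ * (h / (h' * (h + h')))
        + l₂ * ((k + k') / (k * k')) + l₂ * (k / (k' * (k + k')))
      - (l₁ * ((2 * h + h') / (h * (h + h'))) + l₂ * ((2 * k + k') / (k * (k + k'))))
      = 2 * l₁ * h / (h' * (h + h')) + 2 * l₂ * k / (k' * (k + k'))) ∧
    (|l₁ * ((2 * h + h') / (h * (h + h'))) + l₂ * ((2 * k + k') / (k * (k + k')))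
        + (2 * l₁ * h / (h' * (h + h')) + 2 * l₂ * k / (k' * (k + k')))|
      = l₁ * ((h + h') / (h * h')) + l₁ * (h / (h' * (h + h')))
        + l₂ * ((k + k') / (k * k')) + l₂ * (k / (k' * (k + k')))) ∧
    (∀ q : ℝ, 0 ≤ q →
      |l₁ * ((2 * h + h') / (h * (h + h'))) + l₂ * ((2 * k + k') / (k * (k + k'))) + q|
        ≥ l₁ * ((h + h') / (h * h')) + l₁ * (h / (h' * (h + h')))
          + l₂ * ((k + k') / (k * k')) + l₂ * (k / (k' * (k + k'))) →
      2 * l₁ * h / (h' * (h + h')) + 2 * l₂ * k / (k' * (k + k')) ≤ q) := by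
  have hhh' : 0 < h + h' := by linarith
  have hkk' : 0 < k + k' := by linarith
  have key : l₁ * ((h + h') / (h * h')) + l₁ * (h / (h' * (h + h')))
        + l₂ * ((k + k') / (k * k')) + l₂ * (k / (k' * (k + k')))
      - (l₁ * ((2 * h + h') / (h * (h + h'))) + l₂ * ((2 * k + k') / (k * (k + k'))))
      = 2 * l₁ * h / (h' * (h + h')) + 2 * l₂ * k / (k' * (k + k')) := by
    field_simp
    ring
  have hD : 0 ≤ l₁ * ((2 * h + h') / (h * (h + h'))) + l₂ * ((2 * k + k') / (k * (k + k'))) := by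
    positivity
  have hp : 0 ≤ 2 * l₁ * h / (h' * (h + h')) + 2 * l₂ * k / (k' * (k + k')) := by positivity
  refine ⟨key, ?_, ?_⟩
  · rw [abs_of_nonneg (by linarith)]
    linarith
  · intro q hq hge
    rw [abs_of_nonneg (by linarith)] at hge
    linarith
end

section
/- Let n ≥ 1 and let a, b, c, f : {0, …, n−1} → ℝ with a₀ = 0 and c_{n−1} = 0, satisfying |b_i| > |a_i| + |c_i| for every i. Define α₀ = c₀/b₀, β₀ = f₀/b₀, and recursively α_i = c_i/(b_i − a_i α_{i−1}), β_i = (f_i − a_i β_{i−1})/(b_i − a_i α_{i−1}); then define x_{n−1} = β_{n−1} and x_i = β_i − α_i x_{i+1} for i = n−2 down to 0. Then the vector x is the unique solution of the tridiagonal linear system A x = f, where A is the n × n matrix with A_{ii} = b_i, A_{i,i−1} = a_i, A_{i,i+1} = c_i, and all other entries zero. -/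
/-! The forward sweep is an LU factorisation of the tridiagonal matrix. With the denominators
`dᵢ = bᵢ - aᵢ αᵢ₋₁` and the residuals `rᵢ = yᵢ + αᵢ yᵢ₊₁ - βᵢ` of the backward recurrence, row `i`
of `A y - f` equals `dᵢ rᵢ + aᵢ rᵢ₋₁`. Diagonal dominance gives inductively `|αᵢ| ≤ 1`, hence
`|dᵢ| ≥ |bᵢ| - |aᵢ| > |cᵢ|`, so no `dᵢ` vanishes and `A y = f` holds iff every `rᵢ` vanishes.
Extending vectors by `yₙ = 0`, the backward substitution is the unique sequence with this property. -/

/-- Thomas forward-sweep coefficients `α`: `α₀ = c₀ / b₀` and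
`αᵢ = cᵢ / (bᵢ − aᵢ αᵢ₋₁)`. -/
noncomputable def thomasAlpha (a b c : ℕ → ℝ) : ℕ → ℝ
  | 0 => c 0 / b 0
  | i + 1 => c (i + 1) / (b (i + 1) - a (i + 1) * thomasAlpha a b c i)

/-- Thomas forward-sweep coefficients `β`: `β₀ = f₀ / b₀` and
`βᵢ = (fᵢ − aᵢ βᵢ₋₁) / (bᵢ − aᵢ αᵢ₋₁)`. -/
noncomputable def thomasBeta (a b c f : ℕ → ℝ) : ℕ → ℝ
  | 0 => f 0 / b 0
  | i + 1 => (f (i + 1) - a (i + 1) * thomasBeta a b c f i) /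
      (b (i + 1) - a (i + 1) * thomasAlpha a b c i)

/-- Backward substitution of the Thomas method, indexed from the last unknown:
`thomasRev a b c f n j = x_{n−1−j}`, i.e. `x_{n−1} = β_{n−1}` and
`xᵢ = βᵢ − αᵢ x_{i+1}`. -/
noncomputable def thomasRev (a b c f : ℕ → ℝ) (n : ℕ) : ℕ → ℝ
  | 0 => thomasBeta a b c f (n - 1)
  | j + 1 => thomasBeta a b c f (n - 1 - (j + 1)) -
      thomasAlpha a b c (n - 1 - (j + 1)) * thomasRev a b c f n j

noncomputable def thomasDenom (a b c : ℕ → ℝ) : ℕ → ℝ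
  | 0 => b 0
  | i + 1 => b (i + 1) - a (i + 1) * thomasAlpha a b c i

lemma thomasAlpha_eq_div (a b c : ℕ → ℝ) (i : ℕ) :
    thomasAlpha a b c i = c i / thomasDenom a b c i := by
  cases i <;> rfl

lemma abs_lt_abs_thomasDenom {a b c : ℕ → ℝ} {i : ℕ}
    (hdom : ∀ j ≤ i, |a j| + |c j| < |b j|) : |c i| < |thomasDenom a b c i| := by
  induction i with
  | zero =>
    show |c 0| < |b 0|
    linarith [hdom 0 le_rfl, abs_nonneg (a 0)]
  | succ i ih =>
    have hci := ih fun j hj => hdom j (by omega)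
    have hα : |thomasAlpha a b c i| ≤ 1 := by
      rw [thomasAlpha_eq_div, abs_div]
      exact div_le_one_of_le₀ hci.le (abs_nonneg _)
    have haα : |a (i + 1) * thomasAlpha a b c i| ≤ |a (i + 1)| := by
      rw [abs_mul]; exact mul_le_of_le_one_right (abs_nonneg _) hα
    calc |c (i + 1)| < |b (i + 1)| - |a (i + 1)| := by linarith [hdom (i + 1) le_rfl]
      _ ≤ |b (i + 1)| - |a (i + 1) * thomasAlpha a b c i| := by linarith
      _ ≤ |thomasDenom a b c (i + 1)| := abs_sub_abs_le_abs_sub _ _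

lemma thomasDenom_ne_zero {a b c : ℕ → ℝ} {i : ℕ}
    (hdom : ∀ j ≤ i, |a j| + |c j| < |b j|) : thomasDenom a b c i ≠ 0 :=
  abs_pos.mp ((abs_nonneg _).trans_lt (abs_lt_abs_thomasDenom hdom))

def tridiagRow (a b c y : ℕ → ℝ) : ℕ → ℝ
  | 0 => b 0 * y 0 + c 0 * y 1
  | i + 1 => a (i + 1) * y i + b (i + 1) * y (i + 1) + c (i + 1) * y (i + 2)

noncomputable def sweepResidual (a b c f y : ℕ → ℝ) (i : ℕ) : ℝ :=
  y i + thomasAlpha a b c i * y (i + 1) - thomasBeta a b c f i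

lemma tridiagRow_zero_sub {a b c : ℕ → ℝ} (f y : ℕ → ℝ) (hD : thomasDenom a b c 0 ≠ 0) :
    tridiagRow a b c y 0 - f 0 = thomasDenom a b c 0 * sweepResidual a b c f y 0 := by
  simp only [thomasDenom] at hD
  simp only [tridiagRow, sweepResidual, thomasAlpha, thomasBeta, thomasDenom]
  field_simp

lemma tridiagRow_succ_sub {a b c : ℕ → ℝ} (f y : ℕ → ℝ) {i : ℕ}
    (hD : thomasDenom a b c (i + 1) ≠ 0) :
    tridiagRow a b c y (i + 1) - f (i + 1) =
      thomasDenom a b c (i + 1) * sweepResidual a b c f y (i + 1) +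
        a (i + 1) * sweepResidual a b c f y i := by
  simp only [thomasDenom] at hD
  simp only [tridiagRow, sweepResidual, thomasAlpha, thomasBeta, thomasDenom]
  field_simp
  ring

lemma tridiagRow_eq_iff_sweepResidual_eq_zero {a b c : ℕ → ℝ} (f y : ℕ → ℝ) {n : ℕ}
    (hD : ∀ i < n, thomasDenom a b c i ≠ 0) :
    (∀ i < n, tridiagRow a b c y i = f i) ↔ ∀ i < n, sweepResidual a b c f y i = 0 := by
  constructor
  · intro hrow i hi
    induction i with
    | zero =>
      have := tridiagRow_zero_sub f y (hD 0 hi)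
      rw [hrow 0 hi, sub_self] at this
      exact (mul_eq_zero.mp this.symm).resolve_left (hD 0 hi)
    | succ i ih =>
      have := tridiagRow_succ_sub f y (hD (i + 1) hi)
      rw [hrow (i + 1) hi, sub_self, ih (by omega), mul_zero, add_zero] at this
      exact (mul_eq_zero.mp this.symm).resolve_left (hD (i + 1) hi)
  · rintro hr (_ | i) hi
    · rw [← sub_eq_zero, tridiagRow_zero_sub f y (hD 0 hi), hr 0 hi, mul_zero]
    · rw [← sub_eq_zero, tridiagRow_succ_sub f y (hD (i + 1) hi), hr (i + 1) hi,
        hr i (by omega), mul_zero, mul_zero, add_zero]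

lemma eqOn_of_sweepResidual_eq_zero {a b c f y z : ℕ → ℝ} {n : ℕ}
    (hy : ∀ i < n, sweepResidual a b c f y i = 0) (hz : ∀ i < n, sweepResidual a b c f z i = 0)
    (hn : y n = z n) : ∀ i ≤ n, y i = z i := by
  intro i hi
  induction hi using Nat.decreasingInduction with
  | self => exact hn
  | of_succ k hk ih =>
    have := (hy k hk).trans (hz k hk).symm
    rw [sweepResidual, sweepResidual, ih] at this
    linarith

open Matrix

def tridiagonal (n : ℕ) (a b c : ℕ → ℝ) : Matrix (Fin n) (Fin n) ℝ :=
  Matrix.of fun i j =>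
    if (i : ℕ) = j then b i
    else if (i : ℕ) = (j : ℕ) + 1 then a i
    else if (j : ℕ) = (i : ℕ) + 1 then c i
    else 0

def extendByZero {n : ℕ} (z : Fin n → ℝ) (k : ℕ) : ℝ :=
  if h : k < n then z ⟨k, h⟩ else 0

lemma sum_ite_val_eq_mul {n : ℕ} (z : Fin n → ℝ) (m : ℕ) (v : ℝ) :
    ∑ j : Fin n, (if (j : ℕ) = m then v * z j else 0) = v * extendByZero z m := by
  unfold extendByZero
  split_ifs with hm
  · simp_rw [show ∀ j : Fin n, (j : ℕ) = m ↔ j = ⟨m, hm⟩ from fun j => by rw [Fin.ext_iff]]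
    exact Fintype.sum_ite_eq' _ _
  · rw [mul_zero]
    exact Finset.sum_eq_zero fun j _ => if_neg (by omega)

lemma tridiagonal_mulVec_apply {n : ℕ} (a b c : ℕ → ℝ) (z : Fin n → ℝ) (i : Fin n) :
    (tridiagonal n a b c *ᵥ z) i = tridiagRow a b c (extendByZero z) i := by
  obtain ⟨_ | i, hi⟩ := i
  · have hterm : ∀ j : Fin n, tridiagonal n a b c ⟨0, hi⟩ j * z j =
        (if (j : ℕ) = 0 then b 0 * z j else 0) + (if (j : ℕ) = 1 then c 0 * z j else 0) := by
      intro j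
      simp only [tridiagonal, Matrix.of_apply]
      split_ifs <;> first | contradiction | omega | ring
    simp only [Matrix.mulVec, dotProduct, hterm, Finset.sum_add_distrib, sum_ite_val_eq_mul,
      tridiagRow]
  · have hterm : ∀ j : Fin n, tridiagonal n a b c ⟨i + 1, hi⟩ j * z j =
        (if (j : ℕ) = i then a (i + 1) * z j else 0) +
        (if (j : ℕ) = i + 1 then b (i + 1) * z j else 0) +
        (if (j : ℕ) = i + 2 then c (i + 1) * z j else 0) := by
      intro j
      simp only [tridiagonal, Matrix.of_apply]
      split_ifs <;> first | contradiction | omega | ring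
    simp only [Matrix.mulVec, dotProduct, hterm, Finset.sum_add_distrib, sum_ite_val_eq_mul,
      tridiagRow]

lemma tridiagonal_mulVec_eq_iff {n : ℕ} {a b c : ℕ → ℝ} (f : ℕ → ℝ) (z : Fin n → ℝ)
    (hD : ∀ i < n, thomasDenom a b c i ≠ 0) :
    tridiagonal n a b c *ᵥ z = (fun i : Fin n => f i) ↔
      ∀ i < n, sweepResidual a b c f (extendByZero z) i = 0 := by
  rw [← tridiagRow_eq_iff_sweepResidual_eq_zero f _ hD, funext_iff, Fin.forall_iff]
  simp only [tridiagonal_mulVec_apply]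

lemma sweepResidual_thomasRev (a b c f : ℕ → ℝ) (n : ℕ) :
    ∀ i < n, sweepResidual a b c f
      (extendByZero fun i : Fin n => thomasRev a b c f n (n - 1 - i)) i = 0 := by
  intro i hi
  simp only [sweepResidual, extendByZero, dif_pos hi]
  split_ifs with hi'
  · rw [show n - 1 - i = n - 1 - (i + 1) + 1 by omega, thomasRev,
      show n - 1 - (n - 1 - (i + 1) + 1) = i by omega]
    ring
  · rw [show n - 1 - i = 0 by omega, thomasRev, show n - 1 = i by omega]
    ring

theorem thomas_method_solves_tridiagonal_system_general
    (n : ℕ) (a b c f : ℕ → ℝ)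
    (hdom : ∀ i < n, |a i| + |c i| < |b i|)
    (A : Matrix (Fin n) (Fin n) ℝ)
    (hA : ∀ i j : Fin n, A i j =
      if (i : ℕ) = j then b i
      else if (i : ℕ) = (j : ℕ) + 1 then a i
      else if (j : ℕ) = (i : ℕ) + 1 then c i
      else 0)
    (x : Fin n → ℝ) (hx : x = fun i : Fin n => thomasRev a b c f n (n - 1 - (i : ℕ))) :
    A.mulVec x = (fun i : Fin n => f i) ∧
    ∀ y : Fin n → ℝ, A.mulVec y = (fun i : Fin n => f i) → y = x := by
  obtain rfl : A = tridiagonal n a b c := Matrix.ext hA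
  have hD : ∀ i < n, thomasDenom a b c i ≠ 0 := fun i hi =>
    thomasDenom_ne_zero fun j hj => hdom j (hj.trans_lt hi)
  have hx_sweep : ∀ i < n, sweepResidual a b c f (extendByZero x) i = 0 :=
    hx ▸ sweepResidual_thomasRev a b c f n
  refine ⟨(tridiagonal_mulVec_eq_iff f x hD).2 hx_sweep, fun y hy => funext fun i => ?_⟩
  have hyx := eqOn_of_sweepResidual_eq_zero ((tridiagonal_mulVec_eq_iff f y hD).1 hy) hx_sweep
    (by simp [extendByZero]) i i.is_lt.le
  simpa [extendByZero] using hyx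

/-- Correctness of the Thomas method: under strict row diagonal dominance
`|bᵢ| > |aᵢ| + |cᵢ|` (with `a₀ = 0`, `c_{n−1} = 0`), the vector produced by the
forward sweep and backward substitution is the unique solution of the
tridiagonal system `A x = f`. -/
theorem thomas_method_solves_tridiagonal_system
    (n : ℕ) (hn : 1 ≤ n) (a b c f : ℕ → ℝ)
    (ha : a 0 = 0) (hc : c (n - 1) = 0)
    (hdom : ∀ i < n, |a i| + |c i| < |b i|)
    (A : Matrix (Fin n) (Fin n) ℝ)
    (hA : ∀ i j : Fin n, A i j =
      if (i : ℕ) = j then b i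
      else if (i : ℕ) = (j : ℕ) + 1 then a i
      else if (j : ℕ) = (i : ℕ) + 1 then c i
      else 0)
    (x : Fin n → ℝ) (hx : x = fun i : Fin n => thomasRev a b c f n (n - 1 - (i : ℕ))) :
    A.mulVec x = (fun i : Fin n => f i) ∧
    ∀ y : Fin n → ℝ, A.mulVec y = (fun i : Fin n => f i) → y = x :=
  thomas_method_solves_tridiagonal_system_general n a b c f hdom A hA x hx
end
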